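/- The qudit isotropic state I_d(p) = p|Φ_d⟩⟨Φ_d| + ((1−p)/(d²−1))(I − |Φ_d⟩⟨Φ_d|) has positive partial transpose if and only if p ≤ 1/d, for p ∈ [0,1] and d ≥ 2. -/

import Mathlib

open Matrix ComplexOrder

/-- The maximally entangled state |Φ_d⟩ = (1/√d)Σⱼ|jj⟩ as an amplitude vector. -/
noncomputable def PhiVec (d : ℕ) : Fin d × Fin d → ℂ :=
  fun a => if a.1 = a.2 then ((1 / Real.sqrt d : ℝ) : ℂ) else 0

/-- Outer product |v⟩⟨v| of a vector. -/
noncomputable def outer {ι : Type*} (v : ι → ℂ) : Matrix ι ι ℂ :=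
  fun f g => v f * (starRingEnd ℂ) (v g)

/-- The qudit isotropic state I_d(p) = p|Φ_d⟩⟨Φ_d| + ((1−p)/(d²−1))(I − |Φ_d⟩⟨Φ_d|). -/
noncomputable def iso (d : ℕ) (p : ℝ) :
    Matrix (Fin d × Fin d) (Fin d × Fin d) ℂ :=
  (p : ℂ) • outer (PhiVec d)
    + (((1 - p) / (d^2 - 1) : ℝ) : ℂ) •
      ((1 : Matrix (Fin d × Fin d) (Fin d × Fin d) ℂ) - outer (PhiVec d))

/-- Partial transpose on the second factor of ℂᵈ⊗ℂᵈ. -/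
def ptranspose (d : ℕ) (M : Matrix (Fin d × Fin d) (Fin d × Fin d) ℂ) :
    Matrix (Fin d × Fin d) (Fin d × Fin d) ℂ :=
  fun a b => M (a.1, b.2) (b.1, a.2)

/-- The swap matrix. -/
def Vm (d : ℕ) : Matrix (Fin d × Fin d) (Fin d × Fin d) ℂ :=
  fun a b => if b = (a.2, a.1) then 1 else 0

lemma Vm_herm (d : ℕ) : (Vm d)ᴴ = Vm d := by
  ext a b
  simp only [conjTranspose_apply, Vm]
  split_ifs with h1 h2 h2 <;> simp_all [Prod.ext_iff] <;> tauto

lemma Vm_mul_Vm (d : ℕ) : Vm d * Vm d = 1 := by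
  ext a b
  simp only [Vm, Matrix.mul_apply, ite_mul, one_mul, zero_mul, Finset.sum_ite_eq',
    Finset.mem_univ, if_true]
  simp [Matrix.one_apply, Prod.ext_iff, eq_comm]

lemma Vm_mulVec (d : ℕ) (u : Fin d × Fin d → ℂ) :
    Vm d *ᵥ u = fun i => u (i.2, i.1) := by
  ext i
  simp [Vm, Matrix.mulVec, dotProduct, Finset.sum_ite_eq]

lemma outer_Phi (d : ℕ) :
    outer (PhiVec d) =
      fun f g => if f.1 = f.2 ∧ g.1 = g.2 then (1/(d:ℂ)) else 0 := by
  funext f g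
  have hdnn : (0:ℝ) ≤ (d:ℝ) := by positivity
  have hs : ((1 / Real.sqrt d : ℝ) : ℂ) * ((1 / Real.sqrt d : ℝ) : ℂ) = 1 / (d:ℂ) := by
    have h1 : (1 / Real.sqrt d : ℝ) * (1 / Real.sqrt d : ℝ) = 1 / (d:ℝ) := by
      rw [div_mul_div_comm, one_mul, Real.mul_self_sqrt hdnn]
    calc ((1 / Real.sqrt d : ℝ) : ℂ) * ((1 / Real.sqrt d : ℝ) : ℂ)
        = (((1 / Real.sqrt d : ℝ) * (1 / Real.sqrt d : ℝ) : ℝ) : ℂ) := by push_cast; ring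
      _ = ((1 / (d:ℝ) : ℝ) : ℂ) := by rw [h1]
      _ = 1 / (d:ℂ) := by push_cast; ring
  simp only [outer, PhiVec, apply_ite (starRingEnd ℂ), Complex.conj_ofReal, map_zero]
  split_ifs with h1 h2 h3 h4 <;> simp_all [hs]

lemma key (d : ℕ) (hd : 2 ≤ d) (p : ℝ) :
    ptranspose d (iso d p) =
      (((1 - p) / ((d:ℝ)^2 - 1) : ℝ) : ℂ) • 1
        + (((p - (1 - p) / ((d:ℝ)^2 - 1)) / d : ℝ) : ℂ) • Vm d := by
  have hdR : (2:ℝ) ≤ (d:ℝ) := by exact_mod_cast hd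
  have hd0 : (d : ℂ) ≠ 0 := by
    exact_mod_cast Nat.cast_ne_zero.mpr (by omega)
  have hd1R : ((d:ℝ)^2 - 1) ≠ 0 := by nlinarith
  have hd1 : ((d:ℂ)^2 - 1) ≠ 0 := by
    intro h; apply hd1R
    have : (((d:ℝ)^2 - 1 : ℝ) : ℂ) = 0 := by push_cast; exact_mod_cast h
    exact_mod_cast this
  ext ⟨i, j⟩ ⟨k, l⟩
  simp only [ptranspose, iso, Matrix.add_apply, Matrix.smul_apply, Matrix.sub_apply,
    Matrix.one_apply, Vm, smul_eq_mul, Prod.mk.injEq]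
  simp only [outer_Phi]
  by_cases hil : i = l <;> by_cases hkj : k = j <;> by_cases hik : i = k <;>
    by_cases hlj : l = j <;>
    simp_all [eq_comm] <;> push_cast <;> field_simp <;> ring

lemma psd_smul {n : Type*} [Fintype n] {r : ℝ} (hr : 0 ≤ r) {M : Matrix n n ℂ}
    (hM : M.PosSemidef) : ((r : ℂ) • M).PosSemidef := by
  refine posSemidef_iff_dotProduct_mulVec.mpr ⟨?_, ?_⟩
  · show ((r:ℂ) • M)ᴴ = (r:ℂ) • M
    rw [Matrix.conjTranspose_smul, hM.1.eq, Complex.star_def, Complex.conj_ofReal]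
  · intro x
    rw [Matrix.smul_mulVec, dotProduct_smul, smul_eq_mul]
    exact mul_nonneg (Complex.zero_le_real.mpr hr) (hM.dotProduct_mulVec_nonneg x)

lemma psd_plus (d : ℕ) : ((1/2 : ℂ) • (1 + Vm d)).PosSemidef := by
  set P : Matrix (Fin d × Fin d) (Fin d × Fin d) ℂ := (1/2 : ℂ) • (1 + Vm d) with hP
  have hH : Pᴴ = P := by
    rw [hP, conjTranspose_smul, conjTranspose_add, conjTranspose_one, Vm_herm]
    norm_num
  have hexp : (1 + Vm d) * (1 + Vm d) = (1 + Vm d) + (1 + Vm d) := by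
    simp only [mul_add, add_mul, one_mul, mul_one, Vm_mul_Vm]
    abel
  have hPP : P * P = P := by
    rw [hP, smul_mul_assoc, mul_smul_comm, hexp]
    module
  have := Matrix.posSemidef_conjTranspose_mul_self P
  rwa [hH, hPP] at this

lemma psd_minus (d : ℕ) : ((1/2 : ℂ) • (1 - Vm d)).PosSemidef := by
  set P : Matrix (Fin d × Fin d) (Fin d × Fin d) ℂ := (1/2 : ℂ) • (1 - Vm d) with hP
  have hH : Pᴴ = P := by
    rw [hP, conjTranspose_smul, conjTranspose_sub, conjTranspose_one, Vm_herm]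
    norm_num
  have hexp : (1 - Vm d) * (1 - Vm d) = (1 - Vm d) + (1 - Vm d) := by
    simp only [mul_sub, sub_mul, one_mul, mul_one, Vm_mul_Vm]
    abel
  have hPP : P * P = P := by
    rw [hP, smul_mul_assoc, mul_smul_comm, hexp]
    module
  have := Matrix.posSemidef_conjTranspose_mul_self P
  rwa [hH, hPP] at this

/-- For p ∈ [0,1] and d ≥ 2, the isotropic state I_d(p) has positive partial
transpose iff p ≤ 1/d. -/
theorem stmt17 (d : ℕ) (hd : 2 ≤ d) (p : ℝ) (hp : p ∈ Set.Icc (0:ℝ) 1) :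
    (ptranspose d (iso d p)).PosSemidef ↔ p ≤ 1 / d := by
  obtain ⟨hp0, hp1⟩ := hp
  have hD : (2:ℝ) ≤ (d:ℝ) := by exact_mod_cast hd
  have hDpos : (0:ℝ) < (d:ℝ) := by linarith
  set a : ℝ := (1 - p) / ((d:ℝ)^2 - 1) with ha
  set b : ℝ := (p - a) / d with hb
  have hd1R : (0:ℝ) < ((d:ℝ)^2 - 1) := by nlinarith
  have haeq : a * ((d:ℝ)^2 - 1) = 1 - p := by
    rw [ha]; field_simp
  have hbeq : b * (d:ℝ) = p - a := by
    rw [hb]; field_simp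
  have ha0 : 0 ≤ a := div_nonneg (by linarith) (le_of_lt hd1R)
  rw [key d hd p]
  constructor
  · intro h
    -- test vector
    set z : Fin d := ⟨0, by omega⟩ with hz
    set o : Fin d := ⟨1, by omega⟩ with ho
    have hzo : z ≠ o := by simp [hz, ho, Fin.ext_iff]
    set v : Fin d × Fin d → ℂ :=
      fun x => if x = (z, o) then 1 else if x = (o, z) then -1 else 0 with hv
    have hoz : o ≠ z := Ne.symm hzo
    have hVv : Vm d *ᵥ v = -v := by
      rw [Vm_mulVec]
      funext x
      rcases x with ⟨x, y⟩
      show v (y, x) = -(v (x, y))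
      simp only [hv]
      by_cases h1 : x = z <;> by_cases h2 : y = o <;> by_cases h3 : x = o <;>
        by_cases h4 : y = z <;>
        simp_all [Prod.ext_iff, hzo, hoz]
    have hMv : ((a:ℂ) • 1 + (b:ℂ) • Vm d) *ᵥ v = (((a - b : ℝ)):ℂ) • v := by
      rw [Matrix.add_mulVec, Matrix.smul_mulVec, Matrix.smul_mulVec,
        Matrix.one_mulVec, hVv]
      push_cast
      module
    have hvv : star v ⬝ᵥ v = 2 := by
      have hterm : ∀ x, (star v) x * v x =
          (if x = (z, o) then (1:ℂ) else 0) + (if x = (o, z) then 1 else 0) := by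
        intro x
        simp only [Pi.star_apply, hv]
        split_ifs with h1 h2 <;> simp_all [Prod.ext_iff, hzo, hoz]
      rw [dotProduct]
      simp only [hterm]
      rw [Finset.sum_add_distrib]
      simp [Finset.sum_ite_eq', hzo]
      norm_num
    have hq := h.dotProduct_mulVec_nonneg v
    rw [hMv, dotProduct_smul, hvv, smul_eq_mul] at hq
    have hq' : (0:ℂ) ≤ (((a - b) * 2 : ℝ) : ℂ) := by
      convert hq using 1
      push_cast; ring
    have hba : b ≤ a := by
      have := Complex.zero_le_real.mp hq'
      linarith
    rw [le_div_iff₀ hDpos]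
    nlinarith [mul_nonneg (sub_nonneg.mpr hba) (le_of_lt hDpos),
      mul_nonneg (mul_nonneg (sub_nonneg.mpr hba) (le_of_lt hDpos)) (by linarith : (0:ℝ) ≤ (d:ℝ) - 1)]
  · intro hpd
    rw [le_div_iff₀ hDpos] at hpd
    have hab : 0 ≤ a + b := by
      have : 0 ≤ a * ((d:ℝ) - 1) + p := by nlinarith
      nlinarith
    have hamb : 0 ≤ a - b := by
      have h1 : p * ((d:ℝ) - 1) ≤ 1 - p := by nlinarith
      have hD1 : (0:ℝ) < (d:ℝ) - 1 := by linarith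
      have key2 : p * ((d:ℝ) - 1) ≤ (a * ((d:ℝ) + 1)) * ((d:ℝ) - 1) := by nlinarith
      have key3 : p ≤ a * ((d:ℝ) + 1) := le_of_mul_le_mul_right key2 hD1
      have h2 : (a - b) * (d:ℝ) = a * ((d:ℝ) + 1) - p := by
        rw [sub_mul, hbeq]; ring
      have h3 : 0 ≤ (a - b) * (d:ℝ) := by rw [h2]; linarith
      nlinarith [h3, hDpos]
    have hdecomp : ((a:ℝ):ℂ) • (1 : Matrix (Fin d × Fin d) (Fin d × Fin d) ℂ) + ((b:ℝ):ℂ) • Vm d =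
        (((a + b : ℝ)):ℂ) • ((1/2 : ℂ) • (1 + Vm d))
          + (((a - b : ℝ)):ℂ) • ((1/2 : ℂ) • (1 - Vm d)) := by
      push_cast
      module
    rw [hdecomp]
    exact (psd_smul hab (psd_plus d)).add (psd_smul hamb (psd_minus d))
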